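/- There exists a constant C > 0 (depending only on H, C_H, α) such that for all a ∈ ℝ and every integer n ≥ 2, ∑_{k=2}^{n} [(t_k^{H(t_k)} − t_{k-1}^{H(t_{k-1})})² / t_{k-1}^{H(t_{k-1})}] · φ(a / t_{k-1}^{H(t_{k-1})}) ≤ C φ(a) n^{−min(H_min, 2α−1)}. -/

import Mathlib

open Finset

noncomputable def phi (a : ℝ) : ℝ := (Real.sqrt (2 * Real.pi))⁻¹ * Real.exp (-a ^ 2 / 2)

/-!
Write `t = t_{k-1}`, `s = t_k`, `u = H(s)`, `v = H(t)` and split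
`s^u - t^v = (s^u - s^v) + (s^v - t^v)`; since `t^v ≤ 1`, the Gaussian factor is at most `φ(a)`.
The exponent change is controlled by the Hölder continuity of `H`:
`|s^u - s^v| ≤ |u - v| (-log s) s^Hmin ≤ |u - v| √s / (Hmin - 1/2)`, so these parts contribute
`n · n^(-2α)` in total. The base change is handled by the concavity of `x ↦ x^v`:
`s^v - t^v ≤ t^(v-1) / n`, so its share of the `k`-th term is `O(n^(-Hmin) (k-1)^(Hmin-2))`,
summable in `k` because `Hmin < 1`.
-/

open Real

lemma rpow_sub_rpow_le_mul_log {s : ℝ} (hs : 0 < s) (u v : ℝ) :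
    s ^ v - s ^ u ≤ (v - u) * log s * s ^ v := by
  have hexp := add_one_le_exp (log s * (u - v))
  rw [← rpow_def_of_pos hs] at hexp
  have hsplit : s ^ u = s ^ v * s ^ (u - v) := by rw [← rpow_add hs, add_sub_cancel]
  rw [hsplit]
  nlinarith [rpow_pos_of_pos hs v]

lemma abs_rpow_sub_rpow_le {s h u v : ℝ} (hs0 : 0 < s) (hs1 : s ≤ 1) (hu : h ≤ u) (hv : h ≤ v) :
    |s ^ u - s ^ v| ≤ |u - v| * -log s * s ^ h := by
  wlog huv : v ≤ u generalizing u v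
  · rw [abs_sub_comm, abs_sub_comm u]
    exact this hv hu (le_of_not_ge huv)
  rw [abs_of_nonpos (sub_nonpos.2 (rpow_le_rpow_of_exponent_ge hs0 hs1 huv)),
    abs_of_nonneg (sub_nonneg.2 huv), neg_sub]
  calc s ^ v - s ^ u ≤ (u - v) * -log s * s ^ v := by
        linarith [rpow_sub_rpow_le_mul_log hs0 u v]
    _ ≤ (u - v) * -log s * s ^ h := by
        have hlog : 0 ≤ -log s := neg_nonneg.2 (log_nonpos hs0.le hs1)
        exact mul_le_mul_of_nonneg_left (rpow_le_rpow_of_exponent_ge hs0 hs1 hv)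
          (mul_nonneg (sub_nonneg.2 huv) hlog)

lemma neg_log_le_rpow_neg_div {s ε : ℝ} (hs : 0 < s) (hε : 0 < ε) : -log s ≤ s ^ (-ε) / ε := by
  simpa [log_inv, inv_rpow hs.le, rpow_neg hs.le] using log_le_rpow_div (inv_nonneg.2 hs.le) hε

lemma rpow_sub_rpow_le_mul_rpow_sub_one {s t p : ℝ} (ht : 0 < t) (hts : t ≤ s)
    (hp0 : 0 ≤ p) (hp1 : p ≤ 1) : s ^ p - t ^ p ≤ p * t ^ (p - 1) * (s - t) := by
  have hbern := rpow_one_add_le_one_add_mul_self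
    (show -1 ≤ (s - t) / t by rw [le_div_iff₀ ht]; linarith) hp0 hp1
  rw [show 1 + (s - t) / t = s / t by field_simp; ring, div_rpow (ht.le.trans hts) ht.le,
    div_le_iff₀ (rpow_pos_of_pos ht p)] at hbern
  rw [rpow_sub_one ht.ne']
  have : t ^ p * (1 + p * ((s - t) / t)) = t ^ p + p * (t ^ p / t) * (s - t) := by ring
  linarith

lemma phi_nonneg (a : ℝ) : 0 ≤ phi a := by
  unfold phi; positivity

lemma phi_div_le (a : ℝ) {x : ℝ} (hx0 : 0 < x) (hx1 : x ≤ 1) : phi (a / x) ≤ phi a := by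
  have hsq : a ^ 2 ≤ (a / x) ^ 2 := by
    rw [div_pow, le_div_iff₀ (by positivity)]
    exact mul_le_of_le_one_right (sq_nonneg a) (pow_le_one₀ hx0.le hx1)
  unfold phi
  gcongr

lemma sq_rpow_sub_rpow_div_rpow_le {h t s u v : ℝ} (hh : 1 / 2 < h) (ht : 0 < t) (hts : t ≤ s)
    (hs1 : s ≤ 1) (hst : s ≤ 2 * t) (hu : h ≤ u) (hv : h ≤ v) (hv1 : v ≤ 1) :
    (s ^ u - t ^ v) ^ 2 / t ^ v
      ≤ 4 * (|u - v| / (h - 1 / 2)) ^ 2 + 2 * (s - t) ^ 2 * t ^ (h - 2) := by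
  set D := |u - v| / (h - 1 / 2)
  have hε : 0 < h - 1 / 2 := by linarith
  have hs0 : 0 < s := ht.trans_le hts
  have htv : t ≤ t ^ v := by simpa using rpow_le_rpow_of_exponent_ge ht (by linarith) hv1
  have hexp : |s ^ u - s ^ v| ≤ D * √s :=
    calc |s ^ u - s ^ v| ≤ |u - v| * -log s * s ^ h := abs_rpow_sub_rpow_le hs0 hs1 hu hv
      _ ≤ |u - v| * (s ^ (-(h - 1 / 2)) / (h - 1 / 2)) * s ^ h := by
          gcongr; exact neg_log_le_rpow_neg_div hs0 hε
      _ = D * s ^ (-(h - 1 / 2) + h) := by rw [rpow_add hs0]; ring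
      _ = D * √s := by rw [sqrt_eq_rpow]; ring_nf
  have hexp_sq : (s ^ u - s ^ v) ^ 2 ≤ 2 * D ^ 2 * t ^ v :=
    calc (s ^ u - s ^ v) ^ 2 ≤ (D * √s) ^ 2 := by
          rw [← sq_abs]; exact pow_le_pow_left₀ (abs_nonneg _) hexp 2
      _ = D ^ 2 * s := by rw [mul_pow, sq_sqrt hs0.le]
      _ ≤ 2 * D ^ 2 * t ^ v := by nlinarith [sq_nonneg D]
  have hbase0 : 0 ≤ s ^ v - t ^ v := sub_nonneg.2 (rpow_le_rpow ht.le hts (by linarith))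
  have hbase : s ^ v - t ^ v ≤ t ^ (v - 1) * (s - t) := by
    have := rpow_sub_rpow_le_mul_rpow_sub_one ht hts (by linarith) hv1
    have : 0 ≤ t ^ (v - 1) * (s - t) := mul_nonneg (rpow_nonneg ht.le _) (by linarith)
    nlinarith
  have hbase_sq : (s ^ v - t ^ v) ^ 2 ≤ t ^ (h - 2) * t ^ v * (s - t) ^ 2 :=
    calc (s ^ v - t ^ v) ^ 2 ≤ (t ^ (v - 1) * (s - t)) ^ 2 := pow_le_pow_left₀ hbase0 hbase 2
      _ = t ^ (v - 2) * t ^ v * (s - t) ^ 2 := by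
          rw [mul_pow, ← rpow_natCast, ← rpow_mul ht.le, ← rpow_add ht]; ring_nf
      _ ≤ t ^ (h - 2) * t ^ v * (s - t) ^ 2 := by
          have := rpow_le_rpow_of_exponent_ge ht (by linarith) (by linarith : h - 2 ≤ v - 2)
          have := rpow_pos_of_pos ht v
          gcongr
  rw [div_le_iff₀ (rpow_pos_of_pos ht v)]
  nlinarith [sq_nonneg (s ^ u - s ^ v - (s ^ v - t ^ v))]

lemma sum_Icc_sub_one_rpow_le_tsum {p : ℝ} (hp : p < -1) (n : ℕ) :
    ∑ k ∈ Icc 2 n, ((k : ℝ) - 1) ^ p ≤ ∑' j : ℕ, (j : ℝ) ^ p := by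
  have hinj : Set.InjOn (fun k : ℕ => k - 1) (Icc 2 n : Set ℕ) := fun i hi j hj hij => by
    simp only [coe_Icc, Set.mem_Icc] at hi hj
    simp only at hij
    omega
  calc ∑ k ∈ Icc 2 n, ((k : ℝ) - 1) ^ p = ∑ k ∈ Icc 2 n, ((k - 1 : ℕ) : ℝ) ^ p := by
        refine sum_congr rfl fun k hk => ?_
        rw [Nat.cast_sub (by simp only [mem_Icc] at hk; omega), Nat.cast_one]
    _ = ∑ j ∈ (Icc 2 n).image (fun k : ℕ => k - 1), (j : ℝ) ^ p :=
        (sum_image (f := fun j : ℕ => (j : ℝ) ^ p) hinj).symm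
    _ ≤ ∑' j : ℕ, (j : ℝ) ^ p :=
        (summable_nat_rpow.2 hp).sum_le_tsum _ fun j _ => rpow_nonneg j.cast_nonneg p

lemma sum_Icc_le_mul_rpow_neg_min {h β A B : ℝ} (hA : 0 ≤ A) (hB : 0 ≤ B) (hh : h < 1)
    {n : ℕ} (hn : 1 ≤ n) :
    ∑ k ∈ Icc 2 n, (A * (n : ℝ) ^ (-β) + B * (n : ℝ) ^ (-h) * ((k : ℝ) - 1) ^ (h - 2))
      ≤ (A + B * ∑' j : ℕ, (j : ℝ) ^ (h - 2)) * (n : ℝ) ^ (-min h (β - 1)) := by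
  have hn1 : (1 : ℝ) ≤ n := by exact_mod_cast hn
  have hn0 : (0 : ℝ) < n := one_pos.trans_le hn1
  have hcard : ((#(Icc 2 n) : ℕ) : ℝ) ≤ n := by
    rw [Nat.card_Icc]; exact_mod_cast (by omega : n + 1 - 2 ≤ n)
  have hS := sum_Icc_sub_one_rpow_le_tsum (show h - 2 < -1 by linarith) n
  have hβ : (n : ℝ) * (n : ℝ) ^ (-β) ≤ (n : ℝ) ^ (-min h (β - 1)) :=
    calc (n : ℝ) * (n : ℝ) ^ (-β) = (n : ℝ) ^ (1 + -β) := by rw [rpow_add hn0, rpow_one]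
      _ ≤ _ := rpow_le_rpow_of_exponent_le hn1 (by linarith [min_le_right h (β - 1)])
  have hh' : (n : ℝ) ^ (-h) ≤ (n : ℝ) ^ (-min h (β - 1)) :=
    rpow_le_rpow_of_exponent_le hn1 (by linarith [min_le_left h (β - 1)])
  rw [sum_add_distrib, sum_const, nsmul_eq_mul, ← mul_sum]
  calc (#(Icc 2 n) : ℝ) * (A * (n : ℝ) ^ (-β))
        + B * (n : ℝ) ^ (-h) * ∑ k ∈ Icc 2 n, ((k : ℝ) - 1) ^ (h - 2)
      ≤ A * ((n : ℝ) * (n : ℝ) ^ (-β)) + B * (n : ℝ) ^ (-h) * ∑' j : ℕ, (j : ℝ) ^ (h - 2) := by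
        rw [mul_left_comm]; gcongr
    _ ≤ A * (n : ℝ) ^ (-min h (β - 1))
          + B * (n : ℝ) ^ (-min h (β - 1)) * ∑' j : ℕ, (j : ℝ) ^ (h - 2) := by
        have : 0 ≤ ∑' j : ℕ, (j : ℝ) ^ (h - 2) := tsum_nonneg fun j => rpow_nonneg j.cast_nonneg _
        gcongr
    _ = _ := by ring

section HolderExponent

variable {H : ℝ → ℝ} {C_H α h : ℝ}

lemma increment_mul_phi_le (hh : 1 / 2 < h) (hlow : ∀ t ∈ Set.Icc (0 : ℝ) 1, h ≤ H t)
    (hle : ∀ t ∈ Set.Icc (0 : ℝ) 1, H t ≤ 1)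
    (hHolder : ∀ t ∈ Set.Icc (0 : ℝ) 1, ∀ s ∈ Set.Icc (0 : ℝ) 1, |H t - H s| ≤ C_H * |t - s| ^ α)
    (a : ℝ) {N t s : ℝ} (hN : 0 < N) (ht : 0 < t) (hgap : s - t = N⁻¹) (hs1 : s ≤ 1)
    (hst : s ≤ 2 * t) :
    (s ^ H s - t ^ H t) ^ 2 / t ^ H t * phi (a / t ^ H t)
      ≤ (4 * (C_H / (h - 1 / 2)) ^ 2 * N ^ (-(2 * α))
          + 2 * N ^ (-2 : ℝ) * t ^ (h - 2)) * phi a := by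
  have hε : 0 < h - 1 / 2 := by linarith
  have hts : t ≤ s := by linarith [inv_pos.2 hN]
  have htI : t ∈ Set.Icc (0 : ℝ) 1 := ⟨ht.le, hts.trans hs1⟩
  have hsI : s ∈ Set.Icc (0 : ℝ) 1 := ⟨ht.le.trans hts, hs1⟩
  have hHt0 : 0 ≤ H t := by linarith [hlow t htI]
  have hHdiff : |H s - H t| ≤ C_H * N ^ (-α) := by
    simpa [hgap, abs_of_pos (inv_pos.2 hN), inv_rpow hN.le, rpow_neg hN.le]
      using hHolder s hsI t htI
  calc (s ^ H s - t ^ H t) ^ 2 / t ^ H t * phi (a / t ^ H t)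
      ≤ (4 * (|H s - H t| / (h - 1 / 2)) ^ 2 + 2 * (s - t) ^ 2 * t ^ (h - 2)) * phi a := by
        refine mul_le_mul ?_ (phi_div_le a (rpow_pos_of_pos ht _) (rpow_le_one ht.le htI.2 hHt0))
          (phi_nonneg _) (by positivity)
        exact sq_rpow_sub_rpow_div_rpow_le hh ht hts hs1 hst (hlow s hsI) (hlow t htI) (hle t htI)
    _ ≤ (4 * (C_H * N ^ (-α) / (h - 1 / 2)) ^ 2 + 2 * (s - t) ^ 2 * t ^ (h - 2)) * phi a := by
        have := phi_nonneg a
        have := abs_nonneg (H s - H t)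
        gcongr
    _ = _ := by
        have hsq : (N ^ (-α)) ^ 2 = N ^ (-(2 * α)) := by
          rw [← rpow_natCast, ← rpow_mul hN.le]; ring_nf
        have hinv : N⁻¹ ^ 2 = N ^ (-2 : ℝ) := by
          rw [rpow_neg hN.le, inv_pow]; norm_cast
        rw [hgap, hinv, mul_div_right_comm, mul_pow, hsq]
        ring

lemma grid_increment_mul_phi_le (hh : 1 / 2 < h) (hlow : ∀ t ∈ Set.Icc (0 : ℝ) 1, h ≤ H t)
    (hle : ∀ t ∈ Set.Icc (0 : ℝ) 1, H t ≤ 1)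
    (hHolder : ∀ t ∈ Set.Icc (0 : ℝ) 1, ∀ s ∈ Set.Icc (0 : ℝ) 1, |H t - H s| ≤ C_H * |t - s| ^ α)
    (a : ℝ) {n k : ℕ} (hk : 2 ≤ k) (hkn : k ≤ n) :
    (((k : ℝ)/(n : ℝ)) ^ H ((k : ℝ)/(n : ℝ))
          - (((k : ℝ) - 1)/(n : ℝ)) ^ H (((k : ℝ) - 1)/(n : ℝ))) ^ 2
          / ((((k : ℝ) - 1)/(n : ℝ)) ^ H (((k : ℝ) - 1)/(n : ℝ)))
          * phi (a / (((k : ℝ) - 1)/(n : ℝ)) ^ H (((k : ℝ) - 1)/(n : ℝ)))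
      ≤ (4 * (C_H / (h - 1 / 2)) ^ 2 * (n : ℝ) ^ (-(2 * α))
          + 2 * (n : ℝ) ^ (-h) * ((k : ℝ) - 1) ^ (h - 2)) * phi a := by
  have hk2 : (2 : ℝ) ≤ k := by exact_mod_cast hk
  have hkn' : (k : ℝ) ≤ n := by exact_mod_cast hkn
  have hn : (0 : ℝ) < n := by linarith
  have hscale : (n : ℝ) ^ (-2 : ℝ) * (((k : ℝ) - 1) / n) ^ (h - 2)
      = (n : ℝ) ^ (-h) * ((k : ℝ) - 1) ^ (h - 2) := by
    rw [div_rpow (by linarith) hn.le, rpow_sub hn, rpow_neg hn.le, rpow_neg hn.le, rpow_two]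
    field_simp
  rw [mul_assoc 2, ← hscale, ← mul_assoc]
  refine increment_mul_phi_le hh hlow hle hHolder a hn (div_pos (by linarith) hn) ?_
    ((div_le_one hn).2 hkn') ?_
  · field_simp; ring
  · rw [← mul_div_assoc, div_le_div_iff_of_pos_right hn]; linarith

end HolderExponent

theorem stmt_4_general (H : ℝ → ℝ) (C_H α Hmin : ℝ)
    (hrange : ∀ t ∈ Set.Icc (0:ℝ) 1, H t ∈ Set.Ioo (1/2 : ℝ) 1)
    (hmin : IsLeast (H '' Set.Icc (0:ℝ) 1) Hmin)
    (hHolder : ∀ t ∈ Set.Icc (0:ℝ) 1, ∀ s ∈ Set.Icc (0:ℝ) 1,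
      |H t - H s| ≤ C_H * |t - s| ^ α) :
    ∃ C > 0, ∀ a : ℝ, ∀ n : ℕ, 2 ≤ n →
      ∑ k ∈ Finset.Icc 2 n,
        (((k : ℝ)/(n : ℝ)) ^ H ((k : ℝ)/(n : ℝ))
          - (((k : ℝ) - 1)/(n : ℝ)) ^ H (((k : ℝ) - 1)/(n : ℝ))) ^ 2
          / ((((k : ℝ) - 1)/(n : ℝ)) ^ H (((k : ℝ) - 1)/(n : ℝ)))
          * phi (a / (((k : ℝ) - 1)/(n : ℝ)) ^ H (((k : ℝ) - 1)/(n : ℝ)))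
      ≤ C * phi a * (n : ℝ) ^ (-(min Hmin (2 * α - 1))) := by
  obtain ⟨⟨t₀, ht₀, hHt₀⟩, hHmin_le⟩ := hmin
  have hlow : ∀ t ∈ Set.Icc (0 : ℝ) 1, Hmin ≤ H t := fun t ht => hHmin_le ⟨t, ht, rfl⟩
  have hle : ∀ t ∈ Set.Icc (0 : ℝ) 1, H t ≤ 1 := fun t ht => (hrange t ht).2.le
  obtain ⟨hHmin_gt, hHmin_lt⟩ : Hmin ∈ Set.Ioo (1 / 2 : ℝ) 1 := hHt₀ ▸ hrange t₀ ht₀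
  set A := 4 * (C_H / (Hmin - 1 / 2)) ^ 2
  set T := ∑' j : ℕ, (j : ℝ) ^ (Hmin - 2)
  have hT : 0 < T := (summable_nat_rpow.2 (by linarith)).tsum_pos
    (fun j => rpow_nonneg j.cast_nonneg _) 1 (by simp)
  refine ⟨A + 2 * T, by positivity, fun a n hn => ?_⟩
  calc _ ≤ ∑ k ∈ Icc 2 n,
        (A * (n : ℝ) ^ (-(2 * α)) + 2 * (n : ℝ) ^ (-Hmin) * ((k : ℝ) - 1) ^ (Hmin - 2)) * phi a :=
        sum_le_sum fun k hk => grid_increment_mul_phi_le hHmin_gt hlow hle hHolder a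
          (mem_Icc.1 hk).1 (mem_Icc.1 hk).2
    _ ≤ (A + 2 * T) * (n : ℝ) ^ (-min Hmin (2 * α - 1)) * phi a := by
        rw [← sum_mul]
        exact mul_le_mul_of_nonneg_right
          (sum_Icc_le_mul_rpow_neg_min (by positivity) zero_le_two hHmin_lt (by omega))
          (phi_nonneg a)
    _ = _ := mul_right_comm _ _ _

/-- Lemma: `∑_{k=2}^{n} [(t_k^{H(t_k)} − t_{k-1}^{H(t_{k-1})})² / t_{k-1}^{H(t_{k-1})}]
· φ(a / t_{k-1}^{H(t_{k-1})}) ≤ C φ(a) n^{−min(Hmin, 2α−1)}` for all `a ∈ ℝ`, `n ≥ 2`. -/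
theorem stmt_4 (H : ℝ → ℝ) (C_H α Hmin Hmax : ℝ)
    (hcont : ContinuousOn H (Set.Icc 0 1))
    (hrange : ∀ t ∈ Set.Icc (0:ℝ) 1, H t ∈ Set.Ioo (1/2 : ℝ) 1)
    (hmin : IsLeast (H '' Set.Icc (0:ℝ) 1) Hmin)
    (hmax : IsGreatest (H '' Set.Icc (0:ℝ) 1) Hmax)
    (hC_H : 0 < C_H) (hα : α ∈ Set.Ioc (1/2 : ℝ) 1)
    (hHolder : ∀ t ∈ Set.Icc (0:ℝ) 1, ∀ s ∈ Set.Icc (0:ℝ) 1,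
      |H t - H s| ≤ C_H * |t - s| ^ α) :
    ∃ C > 0, ∀ a : ℝ, ∀ n : ℕ, 2 ≤ n →
      ∑ k ∈ Finset.Icc 2 n,
        (((k : ℝ)/(n : ℝ)) ^ H ((k : ℝ)/(n : ℝ))
          - (((k : ℝ) - 1)/(n : ℝ)) ^ H (((k : ℝ) - 1)/(n : ℝ))) ^ 2
          / ((((k : ℝ) - 1)/(n : ℝ)) ^ H (((k : ℝ) - 1)/(n : ℝ)))
          * phi (a / (((k : ℝ) - 1)/(n : ℝ)) ^ H (((k : ℝ) - 1)/(n : ℝ)))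
      ≤ C * phi a * (n : ℝ) ^ (-(min Hmin (2 * α - 1))) :=
  stmt_4_general H C_H α Hmin hrange hmin hHolder
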